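/- arXiv:2004.11173 — 7 statements merged into one kernel-verified Lean document; each statement's English description precedes it below -/
import Mathlib

section
/- Let G be a bipartite graph with parts X and Y, let k be a fixed integer, let p be a partial k-coloring of G, and let G' be obtained from G by adding vertices x and y with x adjacent to all of Y and y adjacent to all of X, and let p' extend p by assigning color k+1 to both x and y. Then p has a proper k-coloring extension on G if and only if p' has a proper (k+1)-coloring extension on G'. -/
/-- The graph `G'` obtained from a bipartite graph `G` with parts `X`, `Y` by adding
two new vertices `x = Sum.inr true` (adjacent to all of `Y`) and `y = Sum.inr false`
(adjacent to all of `X`). -/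
def addXY {V : Type*} (G : SimpleGraph V) (X Y : Set V) : SimpleGraph (V ⊕ Bool) :=
  SimpleGraph.fromRel (fun a b =>
    match a, b with
    | Sum.inl u, Sum.inl w => G.Adj u w
    | Sum.inl u, Sum.inr s => (s = true ∧ u ∈ Y) ∨ (s = false ∧ u ∈ X)
    | _, _ => False)

/-- a partial `k`-coloring `p` of a bipartite graph `G` has a proper
`k`-coloring extension on `G` iff the partial `(k+1)`-coloring `p'` (which agrees with
`p` and gives the new vertices `x`, `y` color `k+1`) has a proper `(k+1)`-coloring
extension on `G' = addXY G X Y`. -/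
theorem stmt_1 {V : Type*} (G : SimpleGraph V) (X Y : Set V)
    (hXY : ∀ v, v ∈ X ↔ v ∉ Y)
    (hbip : ∀ u v, G.Adj u v → (u ∈ X ∧ v ∈ Y) ∨ (u ∈ Y ∧ v ∈ X))
    (k : ℕ) (p : V → Option (Fin k))
    (hp : ∀ u v, G.Adj u v → ∀ c : Fin k, p u = some c → p v ≠ some c) :
    (∃ f : V → Fin k, (∀ u v, G.Adj u v → f u ≠ f v) ∧
        ∀ v, ∀ c : Fin k, p v = some c → f v = c) ↔
    (∃ f : V ⊕ Bool → Fin (k + 1),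
        (∀ a b, (addXY G X Y).Adj a b → f a ≠ f b) ∧
        (∀ v, ∀ c : Fin k, p v = some c → f (Sum.inl v) = Fin.castSucc c) ∧
        (∀ s : Bool, f (Sum.inr s) = Fin.last k)) := by
  constructor
  · rintro ⟨f, hadj, hext⟩
    refine ⟨fun a => match a with
      | Sum.inl v => Fin.castSucc (f v)
      | Sum.inr _ => Fin.last k, ?_, ?_, ?_⟩
    · rintro (u | s) (v | t) hab
      · simp only [addXY, SimpleGraph.fromRel_adj] at hab
        have : G.Adj u v := by
          rcases hab.2 with h | h
          · exact h
          · exact h.symm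
        simpa [Fin.castSucc_inj] using hadj u v this
      · exact fun h => absurd h (Fin.ne_of_lt (Fin.castSucc_lt_last _))
      · exact fun h => absurd h.symm (Fin.ne_of_lt (Fin.castSucc_lt_last _))
      · simp only [addXY, SimpleGraph.fromRel_adj] at hab
        rcases hab.2 with h | h <;> exact h.elim
    · intro v c hc
      simpa [Fin.castSucc_inj] using hext v c hc
    · intro s; rfl
  · rintro ⟨f, hadj, hext, hlast⟩
    have hne : ∀ v : V, f (Sum.inl v) ≠ Fin.last k := by
      intro v
      by_cases hv : v ∈ X
      · have hadj' : (addXY G X Y).Adj (Sum.inl v) (Sum.inr false) := by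
          simp only [addXY, SimpleGraph.fromRel_adj]
          exact ⟨Sum.inl_ne_inr, Or.inl (Or.inr ⟨trivial, hv⟩)⟩
        have := hadj _ _ hadj'
        rwa [hlast false] at this
      · have hv' : v ∈ Y := by
          by_contra h; exact hv ((hXY v).mpr h)
        have hadj' : (addXY G X Y).Adj (Sum.inl v) (Sum.inr true) := by
          simp only [addXY, SimpleGraph.fromRel_adj]
          exact ⟨Sum.inl_ne_inr, Or.inl (Or.inl ⟨trivial, hv'⟩)⟩
        have := hadj _ _ hadj'
        rwa [hlast true] at this
    refine ⟨fun v => Fin.castPred (f (Sum.inl v)) (hne v), ?_, ?_⟩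
    · intro u v huv h
      have hadj' : (addXY G X Y).Adj (Sum.inl u) (Sum.inl v) := by
        simp only [addXY, SimpleGraph.fromRel_adj]
        exact ⟨by simp [huv.ne], Or.inl huv⟩
      exact hadj _ _ hadj' (by
        have := congrArg Fin.castSucc h
        simpa [Fin.castSucc_castPred] using this)
    · intro v c hc
      have := hext v c hc
      have : Fin.castSucc (Fin.castPred (f (Sum.inl v)) (hne v)) = Fin.castSucc c := by
        simpa [Fin.castSucc_castPred] using this
      exact Fin.castSucc_injective _ this
end

section
/- Let G be a connected bipartite graph with parts X and Y and no isolated vertices, let k ≥ 3, and let G' be obtained from G by adding vertices x (adjacent to all of Y) and y (adjacent to all of X). Then G has a k-fall-coloring if and only if G' has a (k+1)-fall-coloring. -/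
lemma addXY_adj_inl_inl {V : Type*} (G : SimpleGraph V) (X Y : Set V) {u v : V} :
    (addXY G X Y).Adj (Sum.inl u) (Sum.inl v) ↔ G.Adj u v := by
  simp only [addXY, SimpleGraph.fromRel_adj]
  constructor
  · rintro ⟨-, h | h⟩
    · exact h
    · exact h.symm
  · intro h
    exact ⟨by simpa using h.ne, Or.inl h⟩

lemma addXY_adj_inl_inr {V : Type*} (G : SimpleGraph V) (X Y : Set V) {u : V} {s : Bool} :
    (addXY G X Y).Adj (Sum.inl u) (Sum.inr s) ↔ ((s = true ∧ u ∈ Y) ∨ (s = false ∧ u ∈ X)) := by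
  simp only [addXY, SimpleGraph.fromRel_adj]
  constructor
  · rintro ⟨-, h | h⟩
    · exact h
    · exact h.elim
  · intro h
    exact ⟨by simp, Or.inl h⟩

lemma addXY_not_adj_inr_inr {V : Type*} (G : SimpleGraph V) (X Y : Set V) {s t : Bool} :
    ¬ (addXY G X Y).Adj (Sum.inr s) (Sum.inr t) := by
  simp only [addXY, SimpleGraph.fromRel_adj]
  rintro ⟨-, h | h⟩ <;> exact h

lemma exists_third {k : ℕ} (hk : 3 ≤ k) (c d : Fin k) : ∃ e : Fin k, e ≠ c ∧ e ≠ d := by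
  by_contra h
  push_neg at h
  have hsub : (Finset.univ : Finset (Fin k)) ⊆ {c, d} := by
    intro e _
    rcases eq_or_ne e c with rfl | h'
    · simp
    · simp [h e h']
  have h1 := Finset.card_le_card hsub
  have h2 : ({c, d} : Finset (Fin k)).card ≤ 2 := by
    apply le_trans (Finset.card_insert_le _ _)
    simp
  simp [Finset.card_univ] at h1
  omega

/-- In a `k`-fall-coloring of a bipartite graph with `k ≥ 3`, part `Y` contains all colors. -/
lemma covers {V : Type*} (G : SimpleGraph V) (X Y : Set V)
    (hXY : ∀ v, v ∈ X ↔ v ∉ Y)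
    (hbip : ∀ u v, G.Adj u v → (u ∈ X ∧ v ∈ Y) ∨ (u ∈ Y ∧ v ∈ X))
    (hniso : ∀ v, ∃ w, G.Adj v w)
    {k : ℕ} (hk : 3 ≤ k) (f : V → Fin k)
    (prop : ∀ u v, G.Adj u v → f u ≠ f v)
    (fall : ∀ v, ∀ c : Fin k, ∃ w, (w = v ∨ G.Adj v w) ∧ f w = c)
    {u0 : V} (hu0 : u0 ∈ X) (c : Fin k) : ∃ w ∈ Y, f w = c := by
  have memY : ∀ {u v : V}, G.Adj u v → u ∈ X → v ∈ Y := by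
    intro u v h hu
    rcases hbip u v h with ⟨_, hv⟩ | ⟨hu', _⟩
    · exact hv
    · exact absurd hu' ((hXY u).mp hu)
  have memX : ∀ {u v : V}, G.Adj u v → u ∈ Y → v ∈ X := by
    intro u v h hu
    rcases hbip u v h with ⟨hu', _⟩ | ⟨_, hv⟩
    · exact absurd hu ((hXY u).mp hu')
    · exact hv
  obtain ⟨w, hw | hw, hfw⟩ := fall u0 c
  · -- f u0 = c ; go two steps away
    subst hw
    obtain ⟨w0, hw0⟩ := hniso w
    have hw0Y : w0 ∈ Y := memY hw0 hu0
    have hne0 : f w0 ≠ c := fun h => prop _ _ hw0 (hfw.trans h.symm)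
    obtain ⟨c2, hc2c, hc2w0⟩ := exists_third hk c (f w0)
    obtain ⟨u1, hu1 | hu1, hfu1⟩ := fall w0 c2
    · subst hu1
      exact absurd hfu1.symm hc2w0
    · have hu1X : u1 ∈ X := memX hu1 hw0Y
      obtain ⟨w2, hw2 | hw2, hfw2⟩ := fall u1 c
      · subst hw2
        exact absurd (hfu1.symm.trans hfw2) hc2c
      · exact ⟨w2, memY hw2 hu1X, hfw2⟩
  · exact ⟨w, memY hw hu0, hfw⟩

/-- for a connected bipartite graph `G` with parts `X`, `Y`, no isolated
vertices, and `k ≥ 3`, `G` has a `k`-fall-coloring iff `G' = addXY G X Y` has a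
`(k+1)`-fall-coloring. -/
theorem stmt_5 {V : Type*} (G : SimpleGraph V) (X Y : Set V)
    (hXY : ∀ v, v ∈ X ↔ v ∉ Y)
    (hbip : ∀ u v, G.Adj u v → (u ∈ X ∧ v ∈ Y) ∨ (u ∈ Y ∧ v ∈ X))
    (hconn : G.Connected)
    (hniso : ∀ v, ∃ w, G.Adj v w)
    (k : ℕ) (hk : 3 ≤ k) :
    (∃ f : V → Fin k,
        (∀ u v, G.Adj u v → f u ≠ f v) ∧
        ∀ v, ∀ c : Fin k, ∃ w, (w = v ∨ G.Adj v w) ∧ f w = c) ↔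
    (∃ f : V ⊕ Bool → Fin (k + 1),
        (∀ a b, (addXY G X Y).Adj a b → f a ≠ f b) ∧
        ∀ a, ∀ c : Fin (k + 1), ∃ b, (b = a ∨ (addXY G X Y).Adj a b) ∧ f b = c) := by
  -- basic facts
  have memY : ∀ {u v : V}, G.Adj u v → u ∈ X → v ∈ Y := by
    intro u v h hu
    rcases hbip u v h with ⟨_, hv⟩ | ⟨hu', _⟩
    · exact hv
    · exact absurd hu' ((hXY u).mp hu)
  have memX : ∀ {u v : V}, G.Adj u v → u ∈ Y → v ∈ X := by
    intro u v h hu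
    rcases hbip u v h with ⟨hu', _⟩ | ⟨_, hv⟩
    · exact absurd hu ((hXY u).mp hu')
    · exact hv
  have hXorY : ∀ v : V, v ∈ X ∨ v ∈ Y := by
    intro v
    by_cases h : v ∈ Y
    · exact Or.inr h
    · exact Or.inl ((hXY v).mpr h)
  obtain ⟨v00⟩ := hconn.nonempty
  have hex : (∃ u, u ∈ X) ∧ (∃ w, w ∈ Y) := by
    obtain ⟨w0, hw0⟩ := hniso v00
    rcases hXorY v00 with h | h
    · exact ⟨⟨v00, h⟩, ⟨w0, memY hw0 h⟩⟩
    · exact ⟨⟨w0, memX hw0 h⟩, ⟨v00, h⟩⟩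
  obtain ⟨⟨x0, hx0⟩, ⟨y0, hy0⟩⟩ := hex
  -- symmetric version of covers for X
  have hXY' : ∀ v, v ∈ Y ↔ v ∉ X := by
    intro v
    constructor
    · intro h h'
      exact (hXY v).mp h' h
    · intro h
      by_contra h'
      exact h ((hXY v).mpr h')
  have hbip' : ∀ u v, G.Adj u v → (u ∈ Y ∧ v ∈ X) ∨ (u ∈ X ∧ v ∈ Y) := by
    intro u v h
    exact (hbip u v h).symm
  constructor
  · rintro ⟨f, prop, fall⟩
    refine ⟨Sum.elim (fun v => (f v).castSucc) (fun _ => Fin.last k), ?_, ?_⟩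
    · rintro (u | s) (v | t) hadj
      · have := (addXY_adj_inl_inl G X Y).mp hadj
        simpa [Fin.castSucc_inj] using prop u v this
      · simpa using (Fin.castSucc_lt_last (f u)).ne
      · simpa using (Fin.castSucc_lt_last (f v)).ne'
      · exact absurd hadj (addXY_not_adj_inr_inr G X Y)
    · rintro (v | s) c
      · rcases eq_or_ne c (Fin.last k) with rfl | hc
        · rcases hXorY v with h | h
          · exact ⟨Sum.inr false, Or.inr ((addXY_adj_inl_inr G X Y).mpr (Or.inr ⟨rfl, h⟩)), rfl⟩
          · exact ⟨Sum.inr true, Or.inr ((addXY_adj_inl_inr G X Y).mpr (Or.inl ⟨rfl, h⟩)), rfl⟩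
        · obtain ⟨w, hw, hfw⟩ := fall v (c.castPred hc)
          refine ⟨Sum.inl w, ?_, ?_⟩
          · rcases hw with rfl | hw
            · exact Or.inl rfl
            · exact Or.inr ((addXY_adj_inl_inl G X Y).mpr hw)
          · simp [hfw, Fin.castSucc_castPred]
      · rcases eq_or_ne c (Fin.last k) with rfl | hc
        · exact ⟨Sum.inr s, Or.inl rfl, rfl⟩
        · cases s
          · -- y : need X to cover all colors; use covers with roles swapped
            obtain ⟨w, hw, hfw⟩ := covers G Y X hXY' hbip' hniso hk f prop fall hy0 (c.castPred hc)
            refine ⟨Sum.inl w, Or.inr ?_, by simp [hfw, Fin.castSucc_castPred]⟩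
            exact ((addXY_adj_inl_inr G X Y).mpr (Or.inr ⟨rfl, hw⟩)).symm
          · obtain ⟨w, hw, hfw⟩ := covers G X Y hXY hbip hniso hk f prop fall hx0 (c.castPred hc)
            refine ⟨Sum.inl w, Or.inr ?_, by simp [hfw, Fin.castSucc_castPred]⟩
            exact ((addXY_adj_inl_inr G X Y).mpr (Or.inl ⟨rfl, hw⟩)).symm
  · rintro ⟨f, prop, fall⟩
    set a := f (Sum.inr true) with ha
    set b := f (Sum.inr false) with hb
    -- every Y vertex avoids a, every X vertex avoids b
    have hYa : ∀ w ∈ Y, f (Sum.inl w) ≠ a := by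
      intro w hw
      exact prop _ _ ((addXY_adj_inl_inr G X Y).mpr (Or.inl ⟨rfl, hw⟩))
    have hXb : ∀ u ∈ X, f (Sum.inl u) ≠ b := by
      intro u hu
      exact prop _ _ ((addXY_adj_inl_inr G X Y).mpr (Or.inr ⟨rfl, hu⟩))
    -- key claim: a = b
    have hab : a = b := by
      by_contra hab
      -- every Y vertex is colored b
      have hYb : ∀ w ∈ Y, f (Sum.inl w) = b := by
        intro w hw
        obtain ⟨b', hb' | hb', hfb'⟩ := fall (Sum.inl w) b
        · exact hb' ▸ hfb'
        · rcases b' with u | s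
          · have hadj := (addXY_adj_inl_inl G X Y).mp hb'
            have huX : u ∈ X := memX hadj hw
            exact absurd hfb' (hXb u huX)
          · rcases (addXY_adj_inl_inr G X Y).mp hb' with ⟨hs, hwY⟩ | ⟨hs, hwX⟩
            · subst hs
              exact absurd (ha.trans hfb') hab
            · exact absurd hw ((hXY w).mp hwX)
      -- x = inr true must see a third color c among {x} ∪ Y, impossible
      obtain ⟨c, hca, hcb⟩ := exists_third (by omega : 3 ≤ k + 1) a b
      obtain ⟨b', hb' | hb', hfb'⟩ := fall (Sum.inr true) c
      · subst hb'
        exact hca (ha.trans hfb').symm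
      · rcases b' with u | s
        · have := (addXY_adj_inl_inr G X Y).mp hb'.symm
          rcases this with ⟨_, hwY⟩ | ⟨hs, _⟩
          · exact hcb (hfb'.symm.trans (hYb u hwY))
          · exact absurd hs (by simp)
        · exact absurd hb' (addXY_not_adj_inr_inr G X Y)
    -- so no vertex of V has color a
    have hVa : ∀ v : V, f (Sum.inl v) ≠ a := by
      intro v
      rcases hXorY v with h | h
      · exact hab ▸ hXb v h
      · exact hYa v h
    -- swap a with last
    set e : Equiv.Perm (Fin (k + 1)) := Equiv.swap a (Fin.last k) with he
    set f2 : V ⊕ Bool → Fin (k + 1) := fun z => e (f z) with hf2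
    have prop2 : ∀ p q, (addXY G X Y).Adj p q → f2 p ≠ f2 q := by
      intro p q h hpq
      exact prop p q h (e.injective hpq)
    have fall2 : ∀ p, ∀ c : Fin (k + 1), ∃ q, (q = p ∨ (addXY G X Y).Adj p q) ∧ f2 q = c := by
      intro p c
      obtain ⟨q, hq, hfq⟩ := fall p (e.symm c)
      exact ⟨q, hq, by simp [hf2, hfq]⟩
    have hne : ∀ v : V, f2 (Sum.inl v) ≠ Fin.last k := by
      intro v h
      apply hVa v
      have : f2 (Sum.inl v) = e a := by rw [h, he]; simp [Equiv.swap_apply_left]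
      exact e.injective this
    have hx2 : f2 (Sum.inr true) = Fin.last k := by
      simp [hf2, he, ← ha, Equiv.swap_apply_left]
    have hy2 : f2 (Sum.inr false) = Fin.last k := by
      simp [hf2, he, ← hb, ← hab, Equiv.swap_apply_left]
    refine ⟨fun v => (f2 (Sum.inl v)).castPred (hne v), ?_, ?_⟩
    · intro u v h heq
      apply prop2 _ _ ((addXY_adj_inl_inl G X Y).mpr h)
      have := congrArg Fin.castSucc heq
      rwa [Fin.castSucc_castPred, Fin.castSucc_castPred] at this
    · intro v c
      obtain ⟨q, hq, hfq⟩ := fall2 (Sum.inl v) c.castSucc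
      rcases q with w | s
      · refine ⟨w, ?_, ?_⟩
        · rcases hq with hq | hq
          · exact Or.inl (by injection hq)
          · exact Or.inr ((addXY_adj_inl_inl G X Y).mp hq)
        · have : (f2 (Sum.inl w)).castPred (hne w) = (c.castSucc).castPred (Fin.castSucc_lt_last c).ne := by
            congr 1
          simpa [Fin.castPred_castSucc] using this
      · exfalso
        cases s
        · rw [hy2] at hfq
          exact (Fin.castSucc_lt_last c).ne' hfq
        · rw [hx2] at hfq
          exact (Fin.castSucc_lt_last c).ne' hfq
end

section
/- Let G be a bipartite graph with diameter at most 3, and let f be a proper 3-coloring of G such that each of the three color classes contains at least one b-vertex (i.e., f is a 3-b-coloring). Then f is a 3-fall-coloring of G, i.e., every vertex of G is a b-vertex. -/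
/-!
Write the bipartition as a 2-colouring `s`. Since the diameter is at most 3 and walks between
vertices of the same side have even length, any two distinct vertices on the same side have a
common neighbour. Hence, if some colour `c` were missing on one side, the b-vertices of the two
other colours `a` and `d` would both lie on that side (they see `c`); their neighbours of colours
`d` and `a` lie on the other side and have a common neighbour, which can only be coloured `c`, on
the first side: a contradiction. So every colour appears on every side, and a vertex `v` sees a
colour `c ≠ f v` through a common neighbour of `v` and a vertex of the third colour on its side.
-/

theorem bool_eq_of_ne_of_ne {a b c : Bool} (hab : a ≠ b) (hbc : b ≠ c) : a = c := by
  revert a b c; decide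

theorem fin_three_exists_ne_ne (a b : Fin 3) : ∃ d, d ≠ a ∧ d ≠ b := by
  revert a b; decide

theorem fin_three_eq_of_ne_of_ne {a b x y : Fin 3} (hab : a ≠ b) (hxa : x ≠ a) (hxb : x ≠ b)
    (hya : y ≠ a) (hyb : y ≠ b) : x = y := by
  omega

namespace SimpleGraph

def IsBVertex {V α : Type*} (G : SimpleGraph V) (f : V → α) (v : V) : Prop :=
  ∀ c, ∃ w, (w = v ∨ G.Adj v w) ∧ f w = c

variable {V : Type*} {G : SimpleGraph V}

theorem IsBVertex.exists_adj {α : Type*} {f : V → α} {v : V} (hv : G.IsBVertex f v) {c : α}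
    (hc : c ≠ f v) : ∃ w, G.Adj v w ∧ f w = c := by
  obtain ⟨w, rfl | hvw, hw⟩ := hv c
  · exact absurd hw.symm hc
  · exact ⟨w, hvw, hw⟩

theorem Connected.exists_common_adj_of_dist_le_three (hconn : G.Connected)
    (hdiam : ∀ u v, G.dist u v ≤ 3) (s : G.Coloring Bool) {u v : V} (huv : u ≠ v)
    (hs : s u = s v) : ∃ w, G.Adj u w ∧ G.Adj v w := by
  obtain ⟨p, hp⟩ := hconn.exists_walk_length_eq_dist u v
  have heven : Even p.length := (s.even_length_iff_congr p).mpr (by rw [hs])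
  have hpos : p.length ≠ 0 := fun h => huv (Walk.eq_of_length_eq_zero h)
  have hle : p.length ≤ 3 := hp ▸ hdiam u v
  have hlen : p.length = 2 := by
    obtain ⟨k, hk⟩ := heven
    omega
  refine ⟨p.getVert 1, ?_, ?_⟩
  · simpa using p.adj_getVert_succ (i := 0) (by omega)
  · simpa [← hlen, Walk.getVert_length] using (p.adj_getVert_succ (i := 1) (by omega)).symm

section ThreeColoring

variable {f : V → Fin 3}

theorem exists_color_sameSide_of_isBVertex (s : G.Coloring Bool)
    (hcommon : ∀ u v, u ≠ v → s u = s v → ∃ w, G.Adj u w ∧ G.Adj v w)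
    (hproper : ∀ u v, G.Adj u v → f u ≠ f v) (hb : ∀ c, ∃ v, f v = c ∧ G.IsBVertex f v)
    (c : Fin 3) (v₀ : V) : ∃ z, s z = s v₀ ∧ f z = c := by
  by_contra! hmissing
  have hsees : ∀ u, (∃ w, G.Adj u w ∧ f w = c) → s u = s v₀ := by
    rintro u ⟨w, huw, rfl⟩
    exact bool_eq_of_ne_of_ne (s.valid huw) fun h => hmissing w h rfl
  obtain ⟨a, hac, -⟩ := fin_three_exists_ne_ne c c
  obtain ⟨d, hdc, hda⟩ := fin_three_exists_ne_ne c a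
  obtain ⟨ua, rfl, hua⟩ := hb a
  obtain ⟨ud, rfl, hud⟩ := hb d
  have hua_side := hsees ua (hua.exists_adj hac.symm)
  have hud_side := hsees ud (hud.exists_adj hdc.symm)
  obtain ⟨p, hp, hpd⟩ := hua.exists_adj hda
  obtain ⟨r, hr, hra⟩ := hud.exists_adj hda.symm
  have hpr : p ≠ r := by rintro rfl; exact hda (hpd.symm.trans hra)
  have hpr_side : s p = s r := by
    refine bool_eq_of_ne_of_ne ?_ (s.valid hr)
    rw [hud_side, ← hua_side]
    exact (s.valid hp).symm
  obtain ⟨x, hpx, hrx⟩ := hcommon p r hpr hpr_side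
  have hx : f x = c :=
    fin_three_eq_of_ne_of_ne hda (hpd ▸ (hproper p x hpx).symm) (hra ▸ (hproper r x hrx).symm)
      hdc.symm hac.symm
  exact s.valid hp (hua_side.trans (hsees p ⟨x, hpx, hx⟩).symm)

theorem isBVertex_of_exists_color_sameSide {β : Type*} (s : V → β)
    (hcommon : ∀ u v, u ≠ v → s u = s v → ∃ w, G.Adj u w ∧ G.Adj v w)
    (hproper : ∀ u v, G.Adj u v → f u ≠ f v) (hsides : ∀ c v, ∃ z, s z = s v ∧ f z = c)
    (v : V) : G.IsBVertex f v := by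
  intro c
  by_cases hvc : f v = c
  · exact ⟨v, Or.inl rfl, hvc⟩
  obtain ⟨d, hdv, hdc⟩ := fin_three_exists_ne_ne (f v) c
  obtain ⟨z, hzv, rfl⟩ := hsides d v
  have hne : z ≠ v := by rintro rfl; exact hdv rfl
  obtain ⟨w, hzw, hvw⟩ := hcommon z v hne hzv
  refine ⟨w, Or.inr hvw, fin_three_eq_of_ne_of_ne (Ne.symm hdv) ?_ ?_ (Ne.symm hvc) hdc.symm⟩
  · exact (hproper v w hvw).symm
  · exact (hproper z w hzw).symm

end ThreeColoring

end SimpleGraph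

/-- in a connected bipartite graph with diameter at most 3, every proper
3-coloring in which each color class contains a b-vertex (a 3-b-coloring) is a
3-fall-coloring: every vertex is a b-vertex. -/
theorem stmt_9 {V : Type*} (G : SimpleGraph V) (X Y : Set V)
    (hXY : ∀ v, v ∈ X ↔ v ∉ Y)
    (hbip : ∀ u v, G.Adj u v → (u ∈ X ∧ v ∈ Y) ∨ (u ∈ Y ∧ v ∈ X))
    (hconn : G.Connected)
    (hdiam : ∀ u v, G.dist u v ≤ 3)
    (f : V → Fin 3)
    (hproper : ∀ u v, G.Adj u v → f u ≠ f v)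
    (hb : ∀ c : Fin 3, ∃ v, f v = c ∧
        ∀ c' : Fin 3, ∃ w, (w = v ∨ G.Adj v w) ∧ f w = c') :
    ∀ v, ∀ c : Fin 3, ∃ w, (w = v ∨ G.Adj v w) ∧ f w = c := by
  classical
  let s : G.Coloring Bool := .mk (fun v => decide (v ∈ X)) fun {u v} huv => by
    have := hbip u v huv
    have := hXY u
    have := hXY v
    simp only [ne_eq, decide_eq_decide]
    tauto
  have hcommon := fun u v => hconn.exists_common_adj_of_dist_le_three hdiam s (u := u) (v := v)
  exact SimpleGraph.isBVertex_of_exists_color_sameSide s hcommon hproper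
    (SimpleGraph.exists_color_sameSide_of_isBVertex s hcommon hproper hb)
end

section
/- Let G be a bipartite graph with diameter at most 3 admitting a 3-fall-coloring f. Then G contains an induced 6-cycle (v1, w12, v2, w23, v3, w13) where v1, v2, v3 lie in one part with colors 1, 2, 3 respectively and each w_{ij} is a common neighbor of v_i and v_j colored with the third color. -/
/-- a bipartite graph with diameter at most 3 admitting a 3-fall-coloring
`f` contains an induced 6-cycle `(v1, w12, v2, w23, v3, w13)` where `v1, v2, v3` lie in
one part with colors `0, 1, 2` respectively and each `w_{ij}` is a common neighbor of
`v_i` and `v_j` colored with the third color. -/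
theorem stmt_10 {V : Type*} (G : SimpleGraph V) (X Y : Set V)
    (hXY : ∀ v, v ∈ X ↔ v ∉ Y)
    (hbip : ∀ u v, G.Adj u v → (u ∈ X ∧ v ∈ Y) ∨ (u ∈ Y ∧ v ∈ X))
    (hconn : G.Connected)
    (hdiam : ∀ u v, G.dist u v ≤ 3)
    (f : V → Fin 3)
    (hproper : ∀ u v, G.Adj u v → f u ≠ f v)
    (hfall : ∀ v, ∀ c : Fin 3, ∃ w, (w = v ∨ G.Adj v w) ∧ f w = c) :
    ∃ v1 v2 v3 w12 w23 w13 : V,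
      v1 ∈ X ∧ v2 ∈ X ∧ v3 ∈ X ∧ w12 ∈ Y ∧ w23 ∈ Y ∧ w13 ∈ Y ∧
      f v1 = 0 ∧ f v2 = 1 ∧ f v3 = 2 ∧ f w12 = 2 ∧ f w23 = 0 ∧ f w13 = 1 ∧
      G.Adj v1 w12 ∧ G.Adj v2 w12 ∧ G.Adj v2 w23 ∧ G.Adj v3 w23 ∧
      G.Adj v3 w13 ∧ G.Adj v1 w13 ∧
      ¬ G.Adj v1 w23 ∧ ¬ G.Adj v2 w13 ∧ ¬ G.Adj v3 w12 := by
  classical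
  -- adjacency flips sides
  have hflip : ∀ u v, G.Adj u v → (u ∈ X ↔ v ∉ X) := by
    intro u v h
    rcases hbip u v h with ⟨hu, hv⟩ | ⟨hu, hv⟩
    · have := (hXY v); have := (hXY u); tauto
    · have := (hXY v); have := (hXY u); tauto
  -- walks preserve parity wrt sides
  have hpar : ∀ {u v : V} (p : G.Walk u v), (u ∈ X ↔ v ∈ X) ↔ Even p.length := by
    intro u v p
    induction p with
    | nil => simp
    | cons h q ih =>
      have h1 := hflip _ _ h
      simp only [SimpleGraph.Walk.length_cons, Nat.even_add_one]
      constructor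
      · intro h2; intro he; have := ih.mpr he; tauto
      · intro h2
        by_cases he : Even q.length
        · exact absurd he h2
        · have := (not_iff_not.mpr ih).mpr he; tauto
  -- distinct vertices on the same side have a common neighbor
  have hcn : ∀ u v : V, u ∈ X → v ∈ X → u ≠ v → ∃ w, G.Adj u w ∧ G.Adj v w := by
    intro u v hu hv hne
    obtain ⟨p, hp⟩ := hconn.exists_walk_length_eq_dist u v
    have heven : Even p.length := (hpar p).mp (by tauto)
    have hpos : 0 < G.dist u v := hconn.pos_dist_of_ne hne
    have hle := hdiam u v
    have h2 : p.length = 2 := by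
      obtain ⟨k, hk⟩ := heven
      rw [hp] at hk
      rw [hp]; omega
    cases p with
    | nil => simp at h2
    | cons h q =>
      cases q with
      | nil => simp at h2
      | cons h' q' =>
        cases q' with
        | nil => exact ⟨_, h, h'.symm⟩
        | cons h'' q'' => simp [SimpleGraph.Walk.length_cons] at h2
  -- adjacency to an X-vertex puts you in Y
  have hY : ∀ u v, u ∈ X → G.Adj u v → v ∈ Y := by
    intro u v hu h
    rcases hbip u v h with ⟨_, hv⟩ | ⟨hu', _⟩
    · exact hv
    · exact absurd hu' ((hXY u).mp hu)
  have hX : ∀ u v, u ∈ Y → G.Adj u v → v ∈ X := by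
    intro u v hu h
    rcases hbip u v h with ⟨hu', _⟩ | ⟨_, hv⟩
    · exact absurd hu ((hXY u).mp hu')
    · exact hv
  -- X is nonempty
  have hne : ∃ x, x ∈ X := by
    obtain ⟨v0⟩ := hconn.nonempty
    by_cases hv0 : v0 ∈ X
    · exact ⟨v0, hv0⟩
    · have hv0Y : v0 ∈ Y := by have := hXY v0; tauto
      obtain ⟨c, hc⟩ : ∃ c : Fin 3, c ≠ f v0 := by
        have : ∀ a : Fin 3, ∃ c : Fin 3, c ≠ a := by decide
        exact this (f v0)
      obtain ⟨w, hw1, hw2⟩ := hfall v0 c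
      have hadj : G.Adj v0 w := by
        rcases hw1 with rfl | h
        · exact absurd hw2.symm hc
        · exact h
      exact ⟨w, hX _ _ hv0Y hadj⟩
  -- every color appears in X
  have hcol : ∀ c : Fin 3, ∃ z ∈ X, f z = c := by
    obtain ⟨x, hx⟩ := hne
    intro c
    by_cases hcx : c = f x
    · exact ⟨x, hx, hcx.symm⟩
    · obtain ⟨c', hc'1, hc'2⟩ : ∃ c' : Fin 3, c' ≠ f x ∧ c' ≠ c := by
        have : ∀ a b : Fin 3, a ≠ b → ∃ c' : Fin 3, c' ≠ b ∧ c' ≠ a := by decide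
        exact this c (f x) hcx
      obtain ⟨u, hu1, hu2⟩ := hfall x c'
      have hadj1 : G.Adj x u := by
        rcases hu1 with rfl | h
        · exact absurd hu2.symm hc'1
        · exact h
      have huY : u ∈ Y := hY _ _ hx hadj1
      obtain ⟨z, hz1, hz2⟩ := hfall u c
      have hadj2 : G.Adj u z := by
        rcases hz1 with rfl | h
        · rw [hu2] at hz2; exact absurd hz2.symm hc'2.symm
        · exact h
      exact ⟨z, hX _ _ huY hadj2, hz2⟩
  obtain ⟨v1, hv1X, hv1⟩ := hcol 0
  obtain ⟨v2, hv2X, hv2⟩ := hcol 1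
  obtain ⟨v3, hv3X, hv3⟩ := hcol 2
  have h12 : v1 ≠ v2 := fun h => by rw [h, hv2] at hv1; exact absurd hv1 (by decide)
  have h23 : v2 ≠ v3 := fun h => by rw [h, hv3] at hv2; exact absurd hv2 (by decide)
  have h13 : v1 ≠ v3 := fun h => by rw [h, hv3] at hv1; exact absurd hv1 (by decide)
  obtain ⟨w12, ha1, ha2⟩ := hcn v1 v2 hv1X hv2X h12
  obtain ⟨w23, hb2, hb3⟩ := hcn v2 v3 hv2X hv3X h23
  obtain ⟨w13, hc1, hc3⟩ := hcn v1 v3 hv1X hv3X h13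
  have third : ∀ a : Fin 3, ∀ b c : Fin 3, b ≠ c → a ≠ b → a ≠ c →
      ∀ d : Fin 3, d ≠ b → d ≠ c → a = d := by decide
  have fw12 : f w12 = 2 := by
    have n1 := hproper _ _ ha1; have n2 := hproper _ _ ha2
    rw [hv1] at n1; rw [hv2] at n2
    exact third (f w12) 0 1 (by decide) (Ne.symm n1) (Ne.symm n2) 2 (by decide) (by decide)
  have fw23 : f w23 = 0 := by
    have n1 := hproper _ _ hb2; have n2 := hproper _ _ hb3
    rw [hv2] at n1; rw [hv3] at n2
    exact third (f w23) 1 2 (by decide) (Ne.symm n1) (Ne.symm n2) 0 (by decide) (by decide)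
  have fw13 : f w13 = 1 := by
    have n1 := hproper _ _ hc1; have n2 := hproper _ _ hc3
    rw [hv1] at n1; rw [hv3] at n2
    exact third (f w13) 0 2 (by decide) (Ne.symm n1) (Ne.symm n2) 1 (by decide) (by decide)
  refine ⟨v1, v2, v3, w12, w23, w13, hv1X, hv2X, hv3X,
    hY _ _ hv1X ha1, hY _ _ hv2X hb2, hY _ _ hv1X hc1,
    hv1, hv2, hv3, fw12, fw23, fw13,
    ha1, ha2, hb2, hb3, hc3, hc1, ?_, ?_, ?_⟩
  · intro h; exact hproper _ _ h (by rw [hv1, fw23])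
  · intro h; exact hproper _ _ h (by rw [hv2, fw13])
  · intro h; exact hproper _ _ h (by rw [hv3, fw12])
end

section
/- Let G be a connected bipartite graph with diameter at most 4, and let f be a surjective homomorphism from G to the 6-cycle C6. Then f is also edge-surjective, i.e., for every edge xy of C6 there exists an edge uv of G with f(u) = x and f(v) = y. -/
/-- The 6-cycle on `Fin 6` (vertices `0,…,5`, edges `{i, i+1 mod 6}`). -/
def C6 : SimpleGraph (Fin 6) := SimpleGraph.fromRel (fun i j => j = i + 1)

lemma c6_step : ∀ i a b : Fin 6, a ≠ b → (b = a + 1 ∨ a = b + 1) →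
    ¬(a = i ∧ b = i + 1) → ¬(b = i ∧ a = i + 1) →
    (a - (i+1)).val ≤ (b - (i+1)).val + 1 ∧ (b - (i+1)).val ≤ (a - (i+1)).val + 1 := by
  decide

lemma walk_bound {V : Type*} {G : SimpleGraph V} {φ : V → Fin 6} {i : Fin 6}
    (hhom : ∀ u v, G.Adj u v → C6.Adj (φ u) (φ v))
    (H : ∀ u v, G.Adj u v → ¬(φ u = i ∧ φ v = i + 1)) :
    ∀ {u v : V} (p : G.Walk u v),
      (φ u - (i+1)).val ≤ (φ v - (i+1)).val + p.length ∧
      (φ v - (i+1)).val ≤ (φ u - (i+1)).val + p.length := by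
  intro u v p
  induction p with
  | nil => simp
  | cons h p ih =>
    have hadj := hhom _ _ h
    rw [C6, SimpleGraph.fromRel_adj] at hadj
    have step := c6_step i _ _ hadj.1 hadj.2 (H _ _ h) (H _ _ h.symm)
    simp only [SimpleGraph.Walk.length_cons]
    omega

/-- if `G` is a connected bipartite graph with diameter at most 4 and
`φ` is a surjective homomorphism from `G` to `C6`, then `φ` is edge-surjective. -/
theorem stmt_12 {V : Type*} (G : SimpleGraph V) (X Y : Set V)
    (hXY : ∀ v, v ∈ X ↔ v ∉ Y)
    (hbip : ∀ u v, G.Adj u v → (u ∈ X ∧ v ∈ Y) ∨ (u ∈ Y ∧ v ∈ X))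
    (hconn : G.Connected)
    (hdiam : ∀ u v, G.dist u v ≤ 4)
    (φ : V → Fin 6)
    (hhom : ∀ u v, G.Adj u v → C6.Adj (φ u) (φ v))
    (hsurj : Function.Surjective φ) :
    ∀ i j : Fin 6, C6.Adj i j → ∃ u v, G.Adj u v ∧ φ u = i ∧ φ v = j := by
  have main : ∀ i : Fin 6, ∃ u v, G.Adj u v ∧ φ u = i ∧ φ v = i + 1 := by
    intro i
    by_contra hc
    push_neg at hc
    have H : ∀ u v, G.Adj u v → ¬(φ u = i ∧ φ v = i + 1) := by
      intro u v h ⟨h1, h2⟩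
      exact hc u v h h1 h2
    obtain ⟨u, hu⟩ := hsurj i
    obtain ⟨v, hv⟩ := hsurj (i + 1)
    obtain ⟨p, hp⟩ := (hconn u v).exists_walk_length_eq_dist
    have hb := walk_bound hhom H p
    rw [hu, hv, hp] at hb
    have hd := hdiam u v
    simp [sub_self] at hb
    have h5 : ∀ k : Fin 6, (k - (k+1)).val = 5 := by decide
    have := h5 i
    omega
  intro i j hij
  rw [C6, SimpleGraph.fromRel_adj] at hij
  rcases hij.2 with h | h
  · obtain ⟨u, v, huv, h1, h2⟩ := main i
    exact ⟨u, v, huv, h1, by rw [h2, h]⟩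
  · obtain ⟨u, v, huv, h1, h2⟩ := main j
    exact ⟨v, u, huv.symm, by rw [h2, h], h1⟩
end

section
/- Let H = (V, E) be a 3-uniform hypergraph and let G' be constructed as above (V ∪ V' ∪ E ∪ {v, v'} with v complete to V, v' complete to V', the matching v_i v'_i, and incidences e_j v_i for v_i ∈ e_j). If G' admits a 3-fall-coloring, then H admits a 2-coloring with no monochromatic hyperedge. -/
/-- Vertices of the graph `G'` used in the fall-coloring reduction: the hypergraph
vertices (`orig`), their copies (`copy`), the hyperedges (`he`), and the two special
vertices `v` and `v'`. -/
inductive RVert (α β : Type*) where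
  | orig : α → RVert α β
  | copy : α → RVert α β
  | he : β → RVert α β
  | v : RVert α β
  | v' : RVert α β

/-- The edges of `G'`: `v` is complete to the original vertices, `v'` is complete to
the copies, each original vertex is matched with its copy, and each hyperedge is
adjacent to its incident vertices. -/
def rRel {α β : Type*} (E : β → Finset α) : RVert α β → RVert α β → Prop
  | RVert.orig _, RVert.v => True
  | RVert.copy _, RVert.v' => True
  | RVert.orig a, RVert.copy a' => a = a'
  | RVert.he b, RVert.orig a => a ∈ E b
  | _, _ => False

/-- The graph `G'` of the fall-coloring reduction. -/
def fallG {α β : Type*} (E : β → Finset α) : SimpleGraph (RVert α β) :=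
  SimpleGraph.fromRel (rRel E)

/-- if `G'` admits a 3-fall-coloring, then the 3-uniform hypergraph with
hyperedges `E` admits a 2-coloring with no monochromatic hyperedge. -/
theorem stmt_15 {α β : Type*} (E : β → Finset α)
    (hcard : ∀ b, (E b).card = 3)
    (f : RVert α β → Fin 3)
    (hproper : ∀ p q, (fallG E).Adj p q → f p ≠ f q)
    (hfall : ∀ p, ∀ col : Fin 3, ∃ q, (q = p ∨ (fallG E).Adj p q) ∧ f q = col) :
    ∃ c : α → Fin 2, ∀ b, ∃ a ∈ E b, ∃ a' ∈ E b, c a ≠ c a' := by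
  set t := f RVert.v with ht
  have h1 : ∀ s : Fin 3, s + 1 ≠ s := by decide
  have h2 : ∀ s : Fin 3, s + 2 ≠ s := by decide
  have h12 : ∀ s : Fin 3, s + 2 ≠ s + 1 := by decide
  have hne : ∀ a : α, f (RVert.orig a) ≠ t := by
    intro a
    refine hproper _ _ ?_
    rw [fallG, SimpleGraph.fromRel_adj]
    exact ⟨by simp, Or.inl trivial⟩
  have hadj : ∀ b q, (fallG E).Adj (RVert.he b) q → ∃ a ∈ E b, q = RVert.orig a := by
    intro b q hq
    rw [fallG, SimpleGraph.fromRel_adj] at hq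
    obtain ⟨-, h | h⟩ := hq
    · cases q <;> simp [rRel] at h ⊢
      exact h
    · cases q <;> simp [rRel] at h
  refine ⟨fun a => if f (RVert.orig a) = t + 1 then 0 else 1, fun b => ?_⟩
  have hhe : f (RVert.he b) = t := by
    obtain ⟨q, hq, hfq⟩ := hfall (RVert.he b) t
    rcases hq with rfl | hadjq
    · exact hfq
    · obtain ⟨a, _, rfl⟩ := hadj b q hadjq
      exact absurd hfq (hne a)
  obtain ⟨q1, hq1, hfq1⟩ := hfall (RVert.he b) (t + 1)
  rcases hq1 with rfl | hadjq1
  · exact absurd (hfq1.symm.trans hhe) (h1 t)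
  obtain ⟨a1, ha1, rfl⟩ := hadj b q1 hadjq1
  obtain ⟨q2, hq2, hfq2⟩ := hfall (RVert.he b) (t + 2)
  rcases hq2 with rfl | hadjq2
  · exact absurd (hfq2.symm.trans hhe) (h2 t)
  obtain ⟨a2, ha2, rfl⟩ := hadj b q2 hadjq2
  refine ⟨a1, ha1, a2, ha2, ?_⟩
  simp [hfq1, hfq2, h12 t]
end

section
/- Let G' be a complete bipartite graph K_{m,m} with parts A = {a_1,...,a_m}, B = {b_1,...,b_m}, and let e_1,...,e_m be 3-element subsets of a set V of colors, with list assignment L(a_i) = L(b_i) = e_i. Then G' has a proper coloring f with f(v) ∈ L(v) for all v if and only if the 3-uniform hypergraph with vertex set V and hyperedges e_1,...,e_m admits a 2-coloring with no monochromatic hyperedge. -/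
/-- the complete bipartite graph `K_{m,m}` with parts
`A = {a_1,…,a_m}`, `B = {b_1,…,b_m}` and lists `L(a_i) = L(b_i) = e i` (3-element
sets of colors from `γ`) has a proper list coloring iff the 3-uniform hypergraph with
hyperedges `e 1, …, e m` admits a 2-coloring with no monochromatic hyperedge. -/
theorem stmt_19 {γ : Type*} (m : ℕ) (e : Fin m → Finset γ)
    (hcard : ∀ j, (e j).card = 3) :
    (∃ f : Fin m ⊕ Fin m → γ,
        (∀ i j, f (Sum.inl i) ≠ f (Sum.inr j)) ∧
        ∀ i, f (Sum.inl i) ∈ e i ∧ f (Sum.inr i) ∈ e i) ↔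
    (∃ c : γ → Fin 2, ∀ j, ∃ a ∈ e j, ∃ b ∈ e j, c a ≠ c b) := by
  classical
  constructor
  · rintro ⟨f, hne, hmem⟩
    refine ⟨fun v => if ∃ i, f (Sum.inl i) = v then 0 else 1, fun j => ?_⟩
    refine ⟨f (Sum.inl j), (hmem j).1, f (Sum.inr j), (hmem j).2, ?_⟩
    simp only []
    rw [if_pos ⟨j, rfl⟩, if_neg (by rintro ⟨i, hi⟩; exact hne i j hi)]
    simp
  · rintro ⟨c, hc⟩
    have h0 : ∀ j, ∃ a ∈ e j, c a = 0 := by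
      intro j
      obtain ⟨a, ha, b, hb, hab⟩ := hc j
      rcases Fin.exists_fin_two.mp ⟨c a, rfl⟩ with h | h
      · exact ⟨a, ha, h⟩
      · refine ⟨b, hb, ?_⟩
        rcases Fin.exists_fin_two.mp ⟨c b, rfl⟩ with h2 | h2
        · exact h2
        · exact absurd (h.trans h2.symm) hab
    have h1 : ∀ j, ∃ a ∈ e j, c a = 1 := by
      intro j
      obtain ⟨a, ha, b, hb, hab⟩ := hc j
      rcases Fin.exists_fin_two.mp ⟨c a, rfl⟩ with h | h
      · refine ⟨b, hb, ?_⟩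
        rcases Fin.exists_fin_two.mp ⟨c b, rfl⟩ with h2 | h2
        · exact absurd (h.trans h2.symm) hab
        · exact h2
      · exact ⟨a, ha, h⟩
    choose g0 hg0 hc0 using h0
    choose g1 hg1 hc1 using h1
    refine ⟨Sum.elim g0 g1, fun i j h => ?_, fun i => ⟨hg0 i, hg1 i⟩⟩
    simp only [Sum.elim_inl, Sum.elim_inr] at h
    have h0' := hc0 i
    have h1' := hc1 j
    rw [h, h1'] at h0'
    exact absurd h0' (by decide)
end
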